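/- arXiv:2204.14266 — 7 statements merged into one kernel-verified Lean document; each statement's English description precedes it below -/
import Mathlib

section
/- Let A be a unital star-algebra over the complex numbers that is zero product determined, and let φ : A → A be a linear map. If for all a, b ∈ A, a·b* = 0 implies a·φ(b)* = 0, then φ is a left centralizer, i.e., φ(a) = φ(1)·a for all a ∈ A. -/
/-- On a unital zero product determined complex ⋆-algebra, a linear map φ
with `a * b⋆ = 0 → a * (φ b)⋆ = 0` is a left centralizer. -/
theorem stmt_0 {A : Type} [Ring A] [Algebra ℂ A] [StarRing A] [StarModule ℂ A]
    (hzpd : ∀ (X : Type) [AddCommGroup X] [Module ℂ X] (Φ : A →ₗ[ℂ] A →ₗ[ℂ] X),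
      (∀ a b : A, a * b = 0 → Φ a b = 0) → ∀ a b : A, Φ a b = Φ (a * b) 1)
    (φ : A →ₗ[ℂ] A)
    (h : ∀ a b : A, a * star b = 0 → a * star (φ b) = 0) :
    ∀ a : A, φ a = φ 1 * a := by
  have key := hzpd A (LinearMap.mk₂ ℂ
    (fun a b => a * star (φ (star b)))
    (fun a a' b => add_mul _ _ _)
    (fun c a b => smul_mul_assoc c a _)
    (fun a b b' => by simp [mul_add])
    (fun c a b => by simp [mul_smul_comm]))
    (fun a b hab => by
      simp only [LinearMap.mk₂_apply]
      exact h a (star b) (by simpa using hab))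
  intro a
  have h1 := key 1 (star a)
  simp only [LinearMap.mk₂_apply, one_mul, star_star] at h1
  have h2 := congrArg star h1
  simpa using h2
end

section
/- Let A be a unital star-algebra over the complex numbers that is zero product determined, and let φ : A → A be a linear map. If for all a, b ∈ A, a*·b = 0 implies φ(a)*·b = 0, then φ is a right centralizer, i.e., φ(a) = a·φ(1) for all a ∈ A. -/
/-- On a unital zero product determined complex ⋆-algebra, a linear map φ
with `a⋆ * b = 0 → (φ a)⋆ * b = 0` is a right centralizer. -/
theorem stmt_2 {A : Type} [Ring A] [Algebra ℂ A] [StarRing A] [StarModule ℂ A]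
    (hzpd : ∀ (X : Type) [AddCommGroup X] [Module ℂ X] (Φ : A →ₗ[ℂ] A →ₗ[ℂ] X),
      (∀ a b : A, a * b = 0 → Φ a b = 0) → ∀ a b : A, Φ a b = Φ (a * b) 1)
    (φ : A →ₗ[ℂ] A)
    (h : ∀ a b : A, star a * b = 0 → star (φ a) * b = 0) :
    ∀ a : A, φ a = a * φ 1 := by
  -- ψ a = star (φ (star a)), a ℂ-linear map
  let ψ : A →ₗ[ℂ] A :=
    { toFun := fun a => star (φ (star a))
      map_add' := by intro a b; simp [star_add]
      map_smul' := by
        intro c a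
        simp only [star_smul, map_smul, star_star, RingHom.id_apply] }
  let Φ : A →ₗ[ℂ] A →ₗ[ℂ] A := (LinearMap.mul ℂ A).comp ψ
  have key : ∀ a b : A, Φ a b = Φ (a * b) 1 := by
    apply hzpd
    intro a b hab
    have : star (star a) * b = 0 := by rwa [star_star]
    simpa [Φ, ψ] using h (star a) b this
  intro a
  have := key 1 (star a)
  simp only [Φ, ψ, LinearMap.comp_apply, LinearMap.mul_apply', LinearMap.coe_mk,
    AddHom.coe_mk, star_one, one_mul] at this
  -- this : star (φ 1) * star a = star (φ (star (star a)))
  rw [star_star] at this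
  have := congrArg star this
  rw [star_mul, star_star, star_star, star_mul, star_one, one_mul, star_star] at this
  exact this.symm
end

section
/- Let A be a unital standard operator algebra on a complex Hilbert space H with dim H ≥ 2, closed under taking adjoints, and let φ : A → A be a linear map. If for all A, B in the algebra, A·B* = 0 implies A·φ(B)* = 0, then φ is a left centralizer: φ(A) = φ(I)·A for all A. -/
set_option synthInstance.maxHeartbeats 1000000
set_option maxHeartbeats 2000000
set_option linter.unusedSectionVars false

open ContinuousLinearMap

section Aux
variable {H : Type} [NormedAddCommGroup H] [InnerProductSpace ℂ H] [CompleteSpace H]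

noncomputable def rk1 (u v : H) : H →L[ℂ] H := (innerSL ℂ v).smulRight u

lemma rk1_apply (u v z : H) : rk1 u v z = (inner ℂ v z : ℂ) • u := rfl

lemma rk1_mem (A : Subalgebra ℂ (H →L[ℂ] H))
    (hFR : ∀ T : H →L[ℂ] H, FiniteDimensional ℂ (LinearMap.range (T : H →ₗ[ℂ] H)) → T ∈ A)
    (u v : H) : rk1 u v ∈ A := by
  apply hFR
  have hle : LinearMap.range (rk1 u v : H →ₗ[ℂ] H) ≤ ℂ ∙ u := by
    rintro x ⟨z, rfl⟩
    exact Submodule.mem_span_singleton.2 ⟨_, rfl⟩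
  exact Submodule.finiteDimensional_of_le hle

lemma rk1_add (u u' v : H) : rk1 (u + u') v = rk1 u v + rk1 u' v := by
  ext z; simp [rk1_apply, smul_add]

lemma rk1_smul (c : ℂ) (u v : H) : rk1 (c • u) v = c • rk1 u v := by
  ext z
  simp only [rk1_apply, ContinuousLinearMap.smul_apply]
  rw [smul_comm]

end Aux

/-- On a unital standard operator algebra (closed under adjoints) on a
complex Hilbert space of dimension ≥ 2, a linear map φ with `A * B† = 0 → A * (φ B)† = 0`
is a left centralizer. -/
theorem stmt_5 {H : Type} [NormedAddCommGroup H] [InnerProductSpace ℂ H] [CompleteSpace H]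
    (hdim : 2 ≤ Module.rank ℂ H)
    (A : Subalgebra ℂ (H →L[ℂ] H))
    (hFR : ∀ T : H →L[ℂ] H, FiniteDimensional ℂ (LinearMap.range (T : H →ₗ[ℂ] H)) → T ∈ A)
    (hstar : ∀ T ∈ A, ContinuousLinearMap.adjoint T ∈ A)
    (φ : A →ₗ[ℂ] A)
    (h : ∀ a b : A, (a : H →L[ℂ] H) * ContinuousLinearMap.adjoint (b : H →L[ℂ] H) = 0 →
      (a : H →L[ℂ] H) * ContinuousLinearMap.adjoint ((φ b : A) : H →L[ℂ] H) = 0) :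
    ∀ a : A, φ a = φ 1 * a := by
  have hnt : Nontrivial H := by
    rw [← rank_pos_iff_nontrivial (R := ℂ)]
    exact lt_of_lt_of_le (by norm_num) hdim
  obtain ⟨x0, hx0⟩ := exists_ne (0 : H)
  set ψ : A → (H →L[ℂ] H) := fun b => ((φ b : A) : H →L[ℂ] H) with hψdef
  set E : H → H → A := fun u v => ⟨rk1 u v, rk1_mem A hFR u v⟩ with hE
  have Ecoe : ∀ u v : H, ((E u v : A) : H →L[ℂ] H) = rk1 u v := fun u v => rfl
  -- key kernel lemma
  have key : ∀ (b : A) (v : H), (b : H →L[ℂ] H) v = 0 → ψ b v = 0 := by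
    intro b v hbv
    have h1 : (rk1 x0 v) * adjoint (b : H →L[ℂ] H) = 0 := by
      ext y
      simp [mul_apply, rk1_apply, adjoint_inner_right, hbv]
    have h2 := h (E x0 v) b (by rw [Ecoe]; exact h1)
    have h3 := congrFun (congrArg DFunLike.coe h2) (ψ b v)
    simp only [Ecoe, mul_apply, rk1_apply, innerSL_apply_apply, adjoint_inner_right, zero_apply] at h3
    rcases smul_eq_zero.1 h3 with h4 | h4
    · simpa [adjoint_inner_right, hψdef] using h4
    · exact absurd h4 hx0
  have ψ_sub : ∀ b c : A, ψ (b - c) = ψ b - ψ c := by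
    intro b c; simp [hψdef, map_sub]
  have ψ_add : ∀ b c : A, ψ (b + c) = ψ b + ψ c := by
    intro b c; simp [hψdef, map_add]
  have ψ_smul : ∀ (t : ℂ) (b : A), ψ (t • b) = t • ψ b := by
    intro t b; simp [hψdef, map_smul]
  have E_smul : ∀ (c : ℂ) (u v : H), E (c • u) v = c • E u v := by
    intro c u v
    apply Subtype.ext
    show rk1 (c • u) v = _
    rw [rk1_smul]; rfl
  -- gvv
  have innone : ∀ v : H, ‖v‖ = 1 → (inner ℂ v v : ℂ) = 1 := by
    intro v hv; rw [inner_self_eq_norm_sq_to_K, hv]; norm_num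
  have gvv : ∀ v : H, ‖v‖ = 1 → ψ (E v v) v = ψ 1 v := by
    intro v hv
    have h0 : ((1 - E v v : A) : H →L[ℂ] H) v = 0 := by
      have h00 : ((1 - E v v : A) : H →L[ℂ] H) = 1 - rk1 v v := by push_cast [Ecoe]; ring
      rw [h00]
      simp [rk1_apply, innone v hv, hv]
    have h1 := key (1 - E v v) v h0
    rw [ψ_sub] at h1
    have h2 : ψ 1 v - ψ (E v v) v = 0 := by simpa using h1
    exact (sub_eq_zero.1 h2).symm
  -- star lemma
  have star : ∀ (u v w : H), ‖v‖ = 1 → ‖w‖ = 1 → (inner ℂ v w : ℂ) = 0 →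
      ψ (E u v) v = ψ (E u w) w := by
    intro u v w hv hw hvw
    have hwv : (inner ℂ w v : ℂ) = 0 := by rw [← inner_conj_symm, hvw]; simp
    have h0 : ((E u v + E u w : A) : H →L[ℂ] H) (v - w) = 0 := by
      have h00 : ((E u v + E u w : A) : H →L[ℂ] H) = rk1 u v + rk1 u w := by
        push_cast [Ecoe]; ring
      rw [h00]
      simp [rk1_apply, inner_sub_right, innone v hv, innone w hw, hvw, hwv, hv, hw]
    have h1 := key _ _ h0
    rw [ψ_add] at h1
    have h2 : ψ (E u v) w = 0 := key (E u v) w (by rw [Ecoe]; simp [rk1_apply, hvw])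
    have h3 : ψ (E u w) v = 0 := key (E u w) v (by rw [Ecoe]; simp [rk1_apply, hwv])
    have h4 : ψ (E u v) v + ψ (E u w) v - (ψ (E u v) w + ψ (E u w) w) = 0 := by
      simpa [map_sub] using h1
    rw [h2, h3] at h4
    have : ψ (E u v) v - ψ (E u w) w = 0 := by
      rw [← h4]; abel
    exact sub_eq_zero.1 this
  -- main G lemma
  have G : ∀ (u v : H), ‖v‖ = 1 → ψ (E u v) v = ψ 1 u := by
    intro u v hv
    set α : ℂ := inner ℂ v u with hα
    set u₁ : H := u - α • v with hu₁
    have hu : u = α • v + u₁ := by rw [hu₁]; abel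
    have hvu₁ : (inner ℂ v u₁ : ℂ) = 0 := by
      simp [hu₁, inner_sub_right, inner_smul_right, innone v hv, hα, hv]
    have hsplit : E u v = α • E v v + E u₁ v := by
      apply Subtype.ext
      show rk1 u v = _
      rw [hu, rk1_add, rk1_smul]
      push_cast [Ecoe]; ring
    rw [hsplit, ψ_add, ψ_smul]
    have hg1 : ψ (E v v) v = ψ 1 v := gvv v hv
    by_cases hc : u₁ = 0
    · have hu' : u = α • v := by rw [hu, hc, add_zero]
      have hE0 : E u₁ v = 0 := by
        apply Subtype.ext
        show rk1 u₁ v = _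
        rw [hc]
        ext z; simp [rk1_apply]
      rw [hE0]
      have hpsi0 : ψ 0 = 0 := by simp [hψdef]
      rw [hpsi0, add_zero, hu']
      simp only [ContinuousLinearMap.smul_apply]
      rw [hg1, map_smul]
    · set w : H := ((‖u₁‖ : ℂ))⁻¹ • u₁ with hwdef
      have hn1 : ‖u₁‖ ≠ 0 := norm_ne_zero_iff.2 hc
      have hw1 : ‖w‖ = 1 := by
        rw [hwdef, norm_smul]
        simp [hn1]
      have hvw : (inner ℂ v w : ℂ) = 0 := by
        rw [hwdef, inner_smul_right, hvu₁, mul_zero]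
      have hu₁w : u₁ = (‖u₁‖ : ℂ) • w := by
        rw [hwdef, smul_smul]
        rw [mul_inv_cancel₀ (by exact_mod_cast hn1), one_smul]
      have hstep : ψ (E u₁ v) v = ψ 1 u₁ := by
        calc ψ (E u₁ v) v = (‖u₁‖ : ℂ) • ψ (E w v) v := by
              conv_lhs => rw [hu₁w]
              rw [E_smul, ψ_smul]; simp
          _ = (‖u₁‖ : ℂ) • ψ (E w w) w := by rw [star w v w hv hw1 hvw]
          _ = (‖u₁‖ : ℂ) • ψ 1 w := by rw [gvv w hw1]
          _ = ψ 1 u₁ := by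
              conv_rhs => rw [hu₁w, map_smul]
      simp only [ContinuousLinearMap.add_apply, ContinuousLinearMap.smul_apply]
      rw [hg1, hstep]
      conv_rhs => rw [hu]
      rw [map_add, map_smul]
  -- conclude
  intro a
  apply Subtype.ext
  apply ContinuousLinearMap.ext
  intro v
  have hrhs : ((φ 1 * a : A) : H →L[ℂ] H) v = ψ 1 ((a : H →L[ℂ] H) v) := rfl
  show ψ a v = _
  rw [hrhs]
  by_cases hv : v = 0
  · simp [hv]
  · have hvn : ‖v‖ ≠ 0 := norm_ne_zero_iff.2 hv
    have hvnC : ((‖v‖ : ℂ)) ≠ 0 := by exact_mod_cast hvn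
    set vh : H := ((‖v‖ : ℂ))⁻¹ • v with hvhdef
    have hvh1 : ‖vh‖ = 1 := by rw [hvhdef, norm_smul]; simp [hvn]
    set u' : H := ((‖v‖ : ℂ))⁻¹ • ((a : H →L[ℂ] H) v) with hu'def
    have hvvh : v = (‖v‖ : ℂ) • vh := by
      rw [hvhdef, smul_smul, mul_inv_cancel₀ hvnC, one_smul]
    have hcv : ((E u' vh : A) : H →L[ℂ] H) v = (a : H →L[ℂ] H) v := by
      rw [Ecoe, rk1_apply]
      have hin : (inner ℂ vh v : ℂ) = (‖v‖ : ℂ) := by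
        rw [hvhdef, inner_smul_left, inner_self_eq_norm_sq_to_K]
        rw [map_inv₀, Complex.conj_ofReal]
        field_simp
        simp
      rw [hin, hu'def, smul_smul, mul_inv_cancel₀ hvnC, one_smul]
    have h0 : ((a - E u' vh : A) : H →L[ℂ] H) v = 0 := by
      have h00 : ((a - E u' vh : A) : H →L[ℂ] H) = (a : H →L[ℂ] H) - rk1 u' vh := by
        push_cast [Ecoe]; ring
      rw [h00]
      simp only [ContinuousLinearMap.sub_apply]
      rw [← Ecoe, hcv, sub_self]
    have h1 := key _ _ h0
    rw [ψ_sub] at h1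
    have h2 : ψ a v = ψ (E u' vh) v := by
      have := sub_eq_zero.1 (by simpa using h1)
      exact this
    calc ψ a v = ψ (E u' vh) v := h2
      _ = (‖v‖ : ℂ) • ψ (E u' vh) vh := by
          conv_lhs => rw [hvvh]
          rw [map_smul]
      _ = (‖v‖ : ℂ) • ψ 1 u' := by rw [G u' vh hvh1]
      _ = ψ 1 ((a : H →L[ℂ] H) v) := by
          rw [hu'def, map_smul, smul_smul, mul_inv_cancel₀ hvnC, one_smul]
end

section
/- Let A be a unital standard operator algebra on a complex Hilbert space H with dim H ≥ 2, closed under taking adjoints, and let φ : A → A be a linear map. If for all A, B in the algebra, A*·B = 0 implies φ(A)*·B = 0, then φ is a right centralizer: φ(A) = A·φ(I) for all A. -/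
set_option synthInstance.maxHeartbeats 1000000
set_option maxHeartbeats 2000000

noncomputable def rk {H : Type} [NormedAddCommGroup H] [InnerProductSpace ℂ H]
    (u v : H) : H →L[ℂ] H :=
  (ContinuousLinearMap.toSpanSingleton ℂ u).comp (innerSL ℂ v)

section rkLemmas

variable {H : Type} [NormedAddCommGroup H] [InnerProductSpace ℂ H]

lemma rk_apply (u v ξ : H) : rk u v ξ = (inner ℂ v ξ : ℂ) • u := rfl

lemma rk_adjoint [CompleteSpace H] (u v : H) :
    ContinuousLinearMap.adjoint (rk u v) = rk v u := by
  symm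
  rw [ContinuousLinearMap.eq_adjoint_iff]
  intro x y
  simp [rk_apply, inner_smul_left, inner_smul_right]
  ring

lemma rk_mem (A : Subalgebra ℂ (H →L[ℂ] H))
    (hFR : ∀ T : H →L[ℂ] H, FiniteDimensional ℂ (LinearMap.range (T : H →ₗ[ℂ] H)) → T ∈ A)
    (u v : H) : rk u v ∈ A := by
  apply hFR
  have hle : LinearMap.range (rk u v : H →ₗ[ℂ] H) ≤ Submodule.span ℂ {u} := by
    rintro x ⟨ξ, rfl⟩
    exact Submodule.smul_mem _ _ (Submodule.mem_span_singleton_self u)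
  exact Submodule.finiteDimensional_of_le hle

lemma rk_mul_rk (u v x y : H) : (rk u v) * (rk x y) = (inner ℂ v x : ℂ) • rk u y := by
  ext ξ
  simp [rk_apply, ContinuousLinearMap.mul_apply, inner_smul_right, smul_smul]
  ring_nf

lemma rk_polar (u v : H) :
    (4:ℂ) • rk u v = rk (u+v) (u+v) - rk (u-v) (u-v)
      + Complex.I • rk (u + Complex.I • v) (u + Complex.I • v)
      - Complex.I • rk (u - Complex.I • v) (u - Complex.I • v) := by
  ext ξ
  simp [rk_apply, inner_add_left, inner_sub_left, inner_smul_left, smul_add, smul_sub, smul_smul]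
  match_scalars
  · linear_combination (2*(inner ℂ v ξ:ℂ)) * Complex.I_sq
  · linear_combination (-2*(inner ℂ u ξ:ℂ)) * Complex.I_sq

end rkLemmas

section main

variable {H : Type} [NormedAddCommGroup H] [InnerProductSpace ℂ H] [CompleteSpace H]
  (A : Subalgebra ℂ (H →L[ℂ] H))
  (hFR : ∀ T : H →L[ℂ] H, FiniteDimensional ℂ (LinearMap.range (T : H →ₗ[ℂ] H)) → T ∈ A)
  (φ : A →ₗ[ℂ] A)
  (h : ∀ a b : A, ContinuousLinearMap.adjoint (a : H →L[ℂ] H) * (b : H →L[ℂ] H) = 0 →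
      ContinuousLinearMap.adjoint ((φ a : A) : H →L[ℂ] H) * (b : H →L[ℂ] H) = 0)

include h in
/-- On "projections" `rk x x`, φ is right multiplication by `φ 1`. -/
lemma proj_step (x : H) :
    φ ⟨rk x x, rk_mem A hFR x x⟩ = ⟨rk x x, rk_mem A hFR x x⟩ * φ 1 := by
  by_cases hx : x = 0
  · have h0 : rk x x = 0 := by ext ξ; simp [rk_apply, hx]
    have : (⟨rk x x, rk_mem A hFR x x⟩ : A) = 0 := Subtype.ext h0
    rw [this, map_zero, zero_mul]
  set n : ℂ := (‖x‖ : ℂ)^2 with hn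
  have hn0 : n ≠ 0 := by
    simp [hn, hx]
  have hxx : (inner ℂ x x : ℂ) = n := inner_self_eq_norm_sq_to_K x
  set e : A := ⟨rk x x, rk_mem A hFR x x⟩ with he
  set b : A := n • 1 - e with hb
  have hbcoe : (b : H →L[ℂ] H) = n • 1 - rk x x := by
    simp [hb, he]
  have hee : rk x x * rk x x = n • rk x x := by rw [rk_mul_rk, hxx]
  -- first application of h
  have h1 : ContinuousLinearMap.adjoint ((e : A) : H →L[ℂ] H) * (b : H →L[ℂ] H) = 0 := by
    rw [hbcoe]
    show ContinuousLinearMap.adjoint (rk x x) * _ = 0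
    rw [rk_adjoint, mul_sub, hee, mul_smul_comm, mul_one, sub_self]
  have h1' := h e b h1
  -- star it: (n • 1 - rk x x) * φ e = 0, i.e. n • φ e = rk x x * φ e
  have hbadj : ContinuousLinearMap.adjoint ((b : A) : H →L[ℂ] H) = (b : H →L[ℂ] H) := by
    rw [hbcoe, ← ContinuousLinearMap.star_eq_adjoint, star_sub, star_smul, star_one,
      ContinuousLinearMap.star_eq_adjoint, rk_adjoint]
    simp [hn, RCLike.star_def]
  -- star it: (n • 1 - rk x x) * φ e = 0, i.e. n • φ e = rk x x * φ e
  have h1'' : n • ((φ e : A) : H →L[ℂ] H) = rk x x * ((φ e : A) : H →L[ℂ] H) := by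
    have h2 := congrArg star h1'
    simp only [star_mul, star_zero, ContinuousLinearMap.star_eq_adjoint,
      ContinuousLinearMap.adjoint_adjoint] at h2
    rw [hbadj, hbcoe, sub_mul, smul_mul_assoc, one_mul, sub_eq_zero] at h2
    exact h2
  -- second application of h
  have h2 : ContinuousLinearMap.adjoint ((b : A) : H →L[ℂ] H) * ((e : A) : H →L[ℂ] H) = 0 := by
    rw [hbadj, hbcoe]
    show (n • 1 - rk x x) * rk x x = 0
    rw [sub_mul, hee, smul_mul_assoc, one_mul, sub_self]
  have h2' := h b e h2
  -- star it: rk x x * φ b = 0, with φ b = n • φ 1 - φ e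
  have hφb : ((φ b : A) : H →L[ℂ] H)
      = n • ((φ 1 : A) : H →L[ℂ] H) - ((φ e : A) : H →L[ℂ] H) := by
    rw [hb, map_sub, map_smul]
    push_cast
    ring
  have h2'' : rk x x * ((φ e : A) : H →L[ℂ] H)
      = n • (rk x x * ((φ 1 : A) : H →L[ℂ] H)) := by
    have h3 := congrArg star h2'
    simp only [star_mul, star_zero, ContinuousLinearMap.star_eq_adjoint,
      ContinuousLinearMap.adjoint_adjoint] at h3
    have headj : ContinuousLinearMap.adjoint ((e : A) : H →L[ℂ] H) = rk x x := by
      show ContinuousLinearMap.adjoint (rk x x) = rk x x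
      rw [rk_adjoint]
    rw [headj, hφb, mul_sub, mul_smul_comm, sub_eq_zero] at h3
    exact h3.symm
  have key : n • ((φ e : A) : H →L[ℂ] H) = n • (rk x x * ((φ 1 : A) : H →L[ℂ] H)) := by
    rw [h1'', h2'']
  have key' := smul_right_injective (H →L[ℂ] H) hn0 key
  apply Subtype.ext
  rw [key']
  rfl

include h in
/-- On all rank-one operators, φ is right multiplication by `φ 1`. -/
lemma rank_one_step (u v : H) :
    φ ⟨rk u v, rk_mem A hFR u v⟩ = ⟨rk u v, rk_mem A hFR u v⟩ * φ 1 := by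
  set I := Complex.I
  have hpol : ((4:ℂ) • (⟨rk u v, rk_mem A hFR u v⟩ : A) : A)
      = ⟨rk (u+v) (u+v), rk_mem A hFR _ _⟩ - ⟨rk (u-v) (u-v), rk_mem A hFR _ _⟩
        + I • (⟨rk (u + I • v) (u + I • v), rk_mem A hFR _ _⟩ : A)
        - I • (⟨rk (u - I • v) (u - I • v), rk_mem A hFR _ _⟩ : A) := by
    apply Subtype.ext
    push_cast
    exact rk_polar u v
  have h4 : (4:ℂ) • φ ⟨rk u v, rk_mem A hFR u v⟩
      = (4:ℂ) • ((⟨rk u v, rk_mem A hFR u v⟩ : A) * φ 1) := by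
    rw [← map_smul, hpol]
    rw [map_sub, map_add, map_sub, map_smul, map_smul]
    rw [proj_step A hFR φ h, proj_step A hFR φ h, proj_step A hFR φ h, proj_step A hFR φ h]
    rw [← smul_mul_assoc, ← sub_mul, ← add_mul, ← smul_mul_assoc, ← sub_mul, ← hpol,
      smul_mul_assoc]
  exact smul_right_injective A (by norm_num : (4:ℂ) ≠ 0) h4

end main

/-- On a unital standard operator algebra (closed under adjoints) on a
complex Hilbert space of dimension ≥ 2, a linear map φ with `A† * B = 0 → (φ A)† * B = 0`
is a right centralizer. -/
theorem stmt_6 {H : Type} [NormedAddCommGroup H] [InnerProductSpace ℂ H] [CompleteSpace H]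
    (hdim : 2 ≤ Module.rank ℂ H)
    (A : Subalgebra ℂ (H →L[ℂ] H))
    (hFR : ∀ T : H →L[ℂ] H, FiniteDimensional ℂ (LinearMap.range (T : H →ₗ[ℂ] H)) → T ∈ A)
    (hstar : ∀ T ∈ A, ContinuousLinearMap.adjoint T ∈ A)
    (φ : A →ₗ[ℂ] A)
    (h : ∀ a b : A, ContinuousLinearMap.adjoint (a : H →L[ℂ] H) * (b : H →L[ℂ] H) = 0 →
      ContinuousLinearMap.adjoint ((φ a : A) : H →L[ℂ] H) * (b : H →L[ℂ] H) = 0) :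
    ∀ a : A, φ a = a * φ 1 := by
  intro a
  apply Subtype.ext
  have hadj : ContinuousLinearMap.adjoint ((φ a : A) : H →L[ℂ] H)
      = ContinuousLinearMap.adjoint ((a : H →L[ℂ] H) * ((φ 1 : A) : H →L[ℂ] H)) := by
    ext z
    by_cases hz : z = 0
    · simp [hz]
    set w := ContinuousLinearMap.adjoint ((a : H →L[ℂ] H)) z with hw
    set c : ℂ := ((‖z‖:ℂ)^2)⁻¹ with hc
    have hzz : (inner ℂ z z : ℂ) = (‖z‖:ℂ)^2 := inner_self_eq_norm_sq_to_K z
    have hzz0 : (inner ℂ z z : ℂ) ≠ 0 := by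
      rw [hzz]; simp [hz]
    set s : A := ⟨rk (c • z) w, rk_mem A hFR _ _⟩ with hs
    have hsadj : ContinuousLinearMap.adjoint ((s : A) : H →L[ℂ] H) = rk w (c • z) := by
      show ContinuousLinearMap.adjoint (rk (c • z) w) = _
      rw [rk_adjoint]
    have hsz : ContinuousLinearMap.adjoint ((s : A) : H →L[ℂ] H) z = w := by
      rw [hsadj, rk_apply, inner_smul_left, hzz]
      have hone : (starRingEnd ℂ) c * (‖z‖:ℂ)^2 = 1 := by
        rw [hc, map_inv₀, ← Complex.ofReal_pow, Complex.conj_ofReal, Complex.ofReal_pow]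
        exact inv_mul_cancel₀ (by rw [← hzz]; exact hzz0)
      rw [hone, one_smul]
    have hmain : ContinuousLinearMap.adjoint (((a - s : A)) : H →L[ℂ] H) * rk z z = 0 := by
      push_cast
      rw [map_sub]
      ext ξ
      simp only [ContinuousLinearMap.mul_apply, ContinuousLinearMap.sub_apply, rk_apply,
        map_smul, ContinuousLinearMap.zero_apply]
      rw [show ContinuousLinearMap.adjoint ((s : A) : H →L[ℂ] H) z = w from hsz, ← hw,
        sub_self, smul_zero]
    have h5 := h (a - s) ⟨rk z z, rk_mem A hFR z z⟩ hmain
    have h6 : ContinuousLinearMap.adjoint ((φ (a - s) : A) : H →L[ℂ] H) z = 0 := by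
      have h6' := congrFun (congrArg DFunLike.coe h5) z
      simp only [ContinuousLinearMap.mul_apply, rk_apply, map_smul,
        ContinuousLinearMap.zero_apply] at h6'
      rcases smul_eq_zero.mp h6' with hc0 | h0
      · exact absurd hc0 hzz0
      · exact h0
    have h7 : ContinuousLinearMap.adjoint ((φ a : A) : H →L[ℂ] H) z
        = ContinuousLinearMap.adjoint ((φ s : A) : H →L[ℂ] H) z := by
      rw [map_sub] at h6
      have hcoe : ((φ a - φ s : A) : H →L[ℂ] H)
          = ((φ a : A) : H →L[ℂ] H) - ((φ s : A) : H →L[ℂ] H) := by push_cast; ring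
      rw [hcoe, map_sub, ContinuousLinearMap.sub_apply, sub_eq_zero] at h6
      exact h6
    rw [h7, hs, rank_one_step A hFR φ h]
    have hcoe2 : (((⟨rk (c • z) w, rk_mem A hFR _ _⟩ : A) * φ 1 : A) : H →L[ℂ] H)
        = rk (c • z) w * ((φ 1 : A) : H →L[ℂ] H) := by push_cast; ring
    have hmul : ∀ (P Q : H →L[ℂ] H), ContinuousLinearMap.adjoint (P * Q)
        = ContinuousLinearMap.adjoint Q * ContinuousLinearMap.adjoint P := by
      intro P Q
      rw [← ContinuousLinearMap.star_eq_adjoint, ← ContinuousLinearMap.star_eq_adjoint,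
        ← ContinuousLinearMap.star_eq_adjoint, star_mul]
    rw [hcoe2, hmul, hmul]
    simp only [ContinuousLinearMap.mul_apply]
    rw [rk_adjoint, show rk w (c • z) z = w from by rw [← hsadj, hsz], ← hw]
  exact ContinuousLinearMap.adjoint.injective hadj
end

section
/- Let A be a unital standard operator algebra on a complex Hilbert space H, and let ψ : A → A be a linear map such that for all S, T in A, ST = 0 implies S·ψ(T) = 0. Then ψ(PA) = P·ψ(A) for every rank-one idempotent P ∈ A and every A in the algebra. -/
set_option synthInstance.maxHeartbeats 1000000
set_option maxHeartbeats 2000000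

/-- On a unital standard operator algebra, a linear map ψ with
`S * T = 0 → S * ψ T = 0` satisfies ψ(P * a) = P * ψ(a) for every rank-one idempotent
P in the algebra. -/
theorem stmt_7 {H : Type} [NormedAddCommGroup H] [InnerProductSpace ℂ H]
    (A : Subalgebra ℂ (H →L[ℂ] H))
    (hFR : ∀ T : H →L[ℂ] H, FiniteDimensional ℂ (LinearMap.range (T : H →ₗ[ℂ] H)) → T ∈ A)
    (ψ : A →ₗ[ℂ] A)
    (h : ∀ s t : A, s * t = 0 → (s : H →L[ℂ] H) * ((ψ t : A) : H →L[ℂ] H) = 0) :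
    ∀ P a : A, P * P = P → Module.rank ℂ (LinearMap.range ((P : H →L[ℂ] H) : H →ₗ[ℂ] H)) = 1 →
      ψ (P * a) = P * ψ a := by
  intro P a hP _
  have h1 : (1 - P) * (P * a) = 0 := by
    have hh : (1 - P) * P = 0 := by rw [sub_mul, one_mul, hP, sub_self]
    rw [← mul_assoc, hh, zero_mul]
  have h2 : P * ((1 - P) * a) = 0 := by
    have hh : P * (1 - P) = 0 := by rw [mul_sub, mul_one, hP, sub_self]
    rw [← mul_assoc, hh, zero_mul]
  have e1 := h _ _ h1
  have e2 := h _ _ h2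
  have hψ : ψ ((1 - P) * a) = ψ a - ψ (P * a) := by
    rw [sub_mul, one_mul, map_sub]
  rw [hψ] at e2
  have e1' : ((ψ (P * a) : A) : H →L[ℂ] H)
      = (P : H →L[ℂ] H) * ((ψ (P * a) : A) : H →L[ℂ] H) := by
    rw [show (((1 - P : A) : H →L[ℂ] H)) = 1 - (P : H →L[ℂ] H) by push_cast; ring] at e1
    rw [sub_mul, one_mul, sub_eq_zero] at e1
    exact e1
  have e2' : (P : H →L[ℂ] H) * ((ψ a : A) : H →L[ℂ] H)
      = (P : H →L[ℂ] H) * ((ψ (P * a) : A) : H →L[ℂ] H) := by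
    rw [show ((ψ a - ψ (P * a) : A) : H →L[ℂ] H)
        = ((ψ a : A) : H →L[ℂ] H) - ((ψ (P * a) : A) : H →L[ℂ] H) by push_cast; ring] at e2
    rw [mul_sub, sub_eq_zero] at e2
    exact e2
  apply Subtype.ext
  show ((ψ (P * a) : A) : H →L[ℂ] H) = ((P * ψ a : A) : H →L[ℂ] H)
  rw [Subalgebra.coe_mul, e2', ← e1']
end

section
/- Every finite rank bounded operator on a complex Hilbert space of dimension at least 2 is a finite linear combination of rank-one idempotent operators. -/
noncomputable section

private def genSet (H : Type) [NormedAddCommGroup H] [InnerProductSpace ℂ H] :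
    Set (H →L[ℂ] H) :=
  {P | P * P = P ∧ Module.rank ℂ (LinearMap.range (P : H →ₗ[ℂ] H)) = 1}

private lemma gen_mem {H : Type} [NormedAddCommGroup H] [InnerProductSpace ℂ H]
    (f : H →L[ℂ] ℂ) (w : H) (hw : f w = 1) : f.smulRight w ∈ genSet H := by
  constructor
  · ext x
    simp [ContinuousLinearMap.mul_apply, hw, smul_smul]
  · have hw0 : w ≠ 0 := by intro h; rw [h] at hw; simp at hw
    have hr : LinearMap.range (f.smulRight w : H →ₗ[ℂ] H) = ℂ ∙ w := by
      apply le_antisymm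
      · rintro u ⟨x, rfl⟩
        exact Submodule.smul_mem _ _ (Submodule.mem_span_singleton_self w)
      · rw [Submodule.span_singleton_le_iff_mem]
        exact ⟨w, by simp [hw]⟩
    rw [hr, Module.rank_eq_one_iff_finrank_eq_one]
    exact finrank_span_singleton hw0

private lemma smulRight_mem_span {H : Type} [NormedAddCommGroup H] [InnerProductSpace ℂ H]
    (f : H →L[ℂ] ℂ) (y : H) :
    f.smulRight y ∈ Submodule.span ℂ (genSet H) := by
  by_cases hf : f = 0
  · have : f.smulRight y = 0 := by ext x; simp [hf]
    rw [this]; exact Submodule.zero_mem _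
  · obtain ⟨z, hz⟩ : ∃ z, f z ≠ 0 := by
      by_contra h; push_neg at h; exact hf (by ext x; simp [h])
    set w := (f z)⁻¹ • z with hwdef
    have hw : f w = 1 := by simp [hwdef, inv_mul_cancel₀ hz]
    have h1 : f (y + (1 - f y) • w) = 1 := by simp [hw]
    have key : f.smulRight y =
        f.smulRight (y + (1 - f y) • w) - (1 - f y) • f.smulRight w := by
      ext x
      simp only [ContinuousLinearMap.sub_apply, ContinuousLinearMap.smul_apply,
        ContinuousLinearMap.smulRight_apply, smul_add, smul_smul, mul_comm]
      abel
    rw [key]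
    exact sub_mem (Submodule.subset_span (gen_mem f _ h1))
      (Submodule.smul_mem _ _ (Submodule.subset_span (gen_mem f w hw)))

/-- Every finite rank bounded operator on a complex Hilbert space of
dimension ≥ 2 is a finite linear combination of rank-one idempotent operators. -/
theorem stmt_10 {H : Type} [NormedAddCommGroup H] [InnerProductSpace ℂ H]
    (hdim : 2 ≤ Module.rank ℂ H)
    (T : H →L[ℂ] H) (hT : FiniteDimensional ℂ (LinearMap.range (T : H →ₗ[ℂ] H))) :
    ∃ (n : ℕ) (c : Fin n → ℂ) (P : Fin n → (H →L[ℂ] H)),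
      (∀ i, P i * P i = P i ∧ Module.rank ℂ (LinearMap.range (P i : H →ₗ[ℂ] H)) = 1) ∧
      T = ∑ i, c i • P i := by
  classical
  haveI : FiniteDimensional ℂ (LinearMap.range (T : H →ₗ[ℂ] H)) := hT
  set R := LinearMap.range (T : H →ₗ[ℂ] H) with hR
  let b : Module.Basis (Fin (Module.finrank ℂ R)) ℂ R := Module.finBasis ℂ R
  let Tr : H →L[ℂ] R := T.codRestrict R (fun x => LinearMap.mem_range_self (T : H →ₗ[ℂ] H) x)
  let ℓ : Fin (Module.finrank ℂ R) → (H →L[ℂ] ℂ) :=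
    fun i => (LinearMap.toContinuousLinearMap (b.coord i)).comp Tr
  have hTsum : T = ∑ i, (ℓ i).smulRight ((b i : R) : H) := by
    ext x
    have := b.sum_repr (Tr x)
    have hcoe : ((∑ i, b.repr (Tr x) i • b i : R) : H) = T x := by
      rw [this]; rfl
    rw [← hcoe]
    push_cast [Submodule.coe_sum]
    simp [ℓ, Module.Basis.coord_apply]
  have hmem : T ∈ Submodule.span ℂ (genSet H) := by
    rw [hTsum]
    exact Submodule.sum_mem _ (fun i _ => smulRight_mem_span (ℓ i) _)
  rw [Submodule.mem_span_set'] at hmem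
  obtain ⟨n, c, g, hg⟩ := hmem
  exact ⟨n, c, fun i => (g i : H →L[ℂ] H), fun i => (g i).2, hg.symm⟩
end
end

section
/- Let A be a zero product determined unital algebra and ψ : A → A a linear map such that for all a, b ∈ A, ab = 0 implies ψ(a)·b = 0. Then ψ(a) = ψ(1)·a for all a ∈ A. -/
/-- On a unital zero product determined algebra, a linear map ψ with
`a * b = 0 → ψ a * b = 0` satisfies ψ(a) = ψ(1) * a. -/
theorem stmt_13 {A : Type} [Ring A] [Algebra ℂ A]
    (hzpd : ∀ (X : Type) [AddCommGroup X] [Module ℂ X] (Φ : A →ₗ[ℂ] A →ₗ[ℂ] X),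
      (∀ a b : A, a * b = 0 → Φ a b = 0) →
        ∀ a b : A, Φ a b = Φ (a * b) 1 ∧ Φ a b = Φ 1 (a * b))
    (ψ : A →ₗ[ℂ] A)
    (h : ∀ a b : A, a * b = 0 → ψ a * b = 0) :
    ∀ a : A, ψ a = ψ 1 * a := by
  intro a
  let Φ : A →ₗ[ℂ] A →ₗ[ℂ] A :=
    LinearMap.mk₂ ℂ (fun x y => ψ x * y)
      (by intro x y z; simp [add_mul])
      (by intro c x y; simp [smul_mul_assoc])
      (by intro x y z; simp [mul_add])
      (by intro c x y; simp [mul_smul_comm])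
  have := (hzpd A Φ (by intro x y hxy; simpa [Φ] using h x y hxy) a 1).2
  simpa [Φ] using this
end
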